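/- Symmetry for conditionally pure cq states: if ρ^{XAB} = Σ_x P_X(x)|x⟩⟨x|^X ⊗ |v_x⟩⟨v_x|^{AB}, where each |v_x⟩ is a pure state on A⊗B, then H_H^ε(B|X)_ρ = H_H^ε(A|X)_ρ for every ε ∈ [0,1]. -/

import Mathlib

open Matrix Kronecker ComplexOrder

noncomputable section

def IsState {n : Type*} [Fintype n] (ρ : Matrix n n ℂ) : Prop :=
  ρ.PosSemidef ∧ ρ.trace = 1

/-- `2^{H_H^ε(ρ)}`: the optimal value of the hypothesis testing minimization
`min { Tr Π : 0 ≤ Π ≤ I, Tr[Πρ] ≥ 1-ε }`. -/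
def hypoVal {n : Type*} [Fintype n] [DecidableEq n] (ρ : Matrix n n ℂ) (ε : ℝ) : ℝ :=
  sInf {t : ℝ | ∃ P : Matrix n n ℂ, P.PosSemidef ∧ ((1 : Matrix n n ℂ) - P).PosSemidef ∧
    1 - ε ≤ ((P * ρ).trace).re ∧ t = (P.trace).re}

/-- The smooth hypothesis testing entropy `H_H^ε(ρ) = log₂` of the optimal value. -/
def HH {n : Type*} [Fintype n] [DecidableEq n] (ρ : Matrix n n ℂ) (ε : ℝ) : ℝ :=
  Real.logb 2 (hypoVal ρ ε)

/-- Outer product `|ψ⟩⟨ψ|`. -/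
def outer {n : Type*} (ψ : n → ℂ) : Matrix n n ℂ := Matrix.vecMulVec ψ (star ψ)

/-- Partial trace over the first tensor factor. -/
def ptL {α β : Type*} [Fintype α] (M : Matrix (α × β) (α × β) ℂ) : Matrix β β ℂ :=
  Matrix.of fun b1 b2 => ∑ a, M (a, b1) (a, b2)

/-- Partial trace over the second tensor factor. -/
def ptR {α β : Type*} [Fintype β] (M : Matrix (α × β) (α × β) ℂ) : Matrix α α ℂ :=
  Matrix.of fun a1 a2 => ∑ b, M (a1, b) (a2, b)

/-- The trace norm `‖M‖₁ = Tr √(Mᴴ M)`. -/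
def traceNorm {n : Type*} [Fintype n] [DecidableEq n] (M : Matrix n n ℂ) : ℝ :=
  (((Matrix.posSemidef_conjTranspose_mul_self M).1.eigenvectorUnitary : Matrix n n ℂ) *
    Matrix.diagonal (((↑) : ℝ → ℂ) ∘ Real.sqrt ∘ (Matrix.posSemidef_conjTranspose_mul_self M).1.eigenvalues) *
    (star (Matrix.posSemidef_conjTranspose_mul_self M).1.eigenvectorUnitary : Matrix n n ℂ)).trace.re

end

/-- `2^{H_H^ε(B|X)}` for a cq state `Σ_x P(x)|x⟩⟨x| ⊗ ρ_x`, with block-diagonal tests. -/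
noncomputable def cqCondVal {X B : Type*} [Fintype X] [Fintype B] [DecidableEq B]
    (P : X → ℝ) (ρ : X → Matrix B B ℂ) (ε : ℝ) : ℝ :=
  sInf {t : ℝ | ∃ Q : X → Matrix B B ℂ,
    (∀ x, (Q x).PosSemidef ∧ ((1 : Matrix B B ℂ) - Q x).PosSemidef) ∧
    1 - ε ≤ ∑ x, P x * ((Q x * ρ x).trace).re ∧
    t = ∑ x, P x * ((Q x).trace).re}

namespace Stmt10Aux

open Matrix

noncomputable section

variable {n : Type*} [Fintype n] [DecidableEq n]

lemma re_trace_nonneg {M : Matrix n n ℂ} (h : M.PosSemidef) : 0 ≤ M.trace.re := by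
  rw [Matrix.trace, Complex.re_sum]
  apply Finset.sum_nonneg
  intro i _
  exact ((Complex.le_def).mp (h.diag_nonneg (i := i))).1

lemma herm_idem_psd {p : Matrix n n ℂ} (h1 : p.IsHermitian) (h2 : p * p = p) :
    p.PosSemidef := by
  have := Matrix.posSemidef_conjTranspose_mul_self p
  rwa [show pᴴ = p from h1, h2] at this

lemma one_sub_idem {p : Matrix n n ℂ} (h2 : p * p = p) :
    ((1 : Matrix n n ℂ) - p) * (1 - p) = 1 - p := by
  rw [mul_sub, mul_one, sub_mul, one_mul, h2, sub_self, sub_zero]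

lemma proj_le_one {p : Matrix n n ℂ} (h1 : p.IsHermitian) (h2 : p * p = p) :
    ((1 : Matrix n n ℂ) - p).PosSemidef :=
  herm_idem_psd (Matrix.isHermitian_one.sub h1) (one_sub_idem h2)

open scoped MatrixOrder in
lemma re_trace_mul_nonneg {M N : Matrix n n ℂ} (hM : M.PosSemidef) (hN : N.PosSemidef) :
    0 ≤ ((M * N).trace).re := by
  have hs : CFC.sqrt M * CFC.sqrt M = M := CFC.sqrt_mul_sqrt_self M hM.nonneg
  have h1 : (M * N).trace = (CFC.sqrt M * N * CFC.sqrt M).trace := by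
    conv_lhs => rw [← hs]
    rw [Matrix.mul_assoc, Matrix.trace_mul_comm, Matrix.mul_assoc]
  rw [h1]
  apply re_trace_nonneg
  have := hN.mul_mul_conjTranspose_same (CFC.sqrt M)
  rwa [show (CFC.sqrt M)ᴴ = CFC.sqrt M from (CFC.sqrt_nonneg M).posSemidef.1] at this

lemma Dmul (U : Matrix n n ℂ) (hU : Uᴴ * U = 1) (f g : n → ℂ) :
    (U * diagonal f * Uᴴ) * (U * diagonal g * Uᴴ) = U * diagonal (f * g) * Uᴴ := by
  have : diagonal f * (Uᴴ * (U * (diagonal g * Uᴴ))) = diagonal (f * g) * Uᴴ := by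
    rw [← Matrix.mul_assoc Uᴴ U, hU, Matrix.one_mul, ← Matrix.mul_assoc,
      Matrix.diagonal_mul_diagonal]
    rfl
  rw [Matrix.mul_assoc (U * diagonal f), Matrix.mul_assoc U (diagonal g), Matrix.mul_assoc U (diagonal f), this,
    ← Matrix.mul_assoc]

lemma Dherm (U : Matrix n n ℂ) (f : n → ℂ) (hf : star f = f) :
    (U * diagonal f * Uᴴ)ᴴ = U * diagonal f * Uᴴ := by
  rw [Matrix.conjTranspose_mul, Matrix.conjTranspose_mul, Matrix.conjTranspose_conjTranspose,
    Matrix.diagonal_conjTranspose, hf, Matrix.mul_assoc]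


lemma trace_sandwich {A B : Type*} [Fintype A] [Fintype B]
    (M : Matrix A B ℂ) (X : Matrix B B ℂ) (R : Matrix A A ℂ) :
    ((M * X * Mᴴ) * R).trace = (X * (Mᴴ * R * M)).trace := by
  rw [Matrix.mul_assoc (M * X) Mᴴ R, Matrix.mul_assoc M X (Mᴴ * R),
    Matrix.trace_mul_comm, Matrix.mul_assoc X (Mᴴ * R) M]

lemma key {A B : Type*} [Fintype A] [DecidableEq A] [Fintype B] [DecidableEq B]
    (M : Matrix A B ℂ) {Q : Matrix B B ℂ} (hQ : Q.PosSemidef)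
    (hQ1 : ((1 : Matrix B B ℂ) - Q).PosSemidef) :
    ∃ Q' : Matrix A A ℂ, Q'.PosSemidef ∧ ((1 : Matrix A A ℂ) - Q').PosSemidef ∧
      ((Q' * (M * Mᴴ)).trace).re = ((Q * (Mᴴ * M)ᵀ).trace).re ∧
      (Q'.trace).re ≤ (Q.trace).re := by
  have hH : (Mᴴ * M).PosSemidef := Matrix.posSemidef_conjTranspose_mul_self M
  set H : Matrix B B ℂ := Mᴴ * M with hHdef
  have hHerm : H.IsHermitian := hH.1
  set U : Matrix B B ℂ := (hHerm.eigenvectorUnitary : Matrix B B ℂ) with hUdef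
  have hU : Uᴴ * U = 1 := by
    rw [← Matrix.star_eq_conjTranspose]
    exact (Matrix.mem_unitaryGroup_iff').mp (Matrix.IsHermitian.eigenvectorUnitary hHerm).2
  set lam : B → ℂ := RCLike.ofReal ∘ hHerm.eigenvalues with hlamdef
  have hspec : H = U * Matrix.diagonal lam * Uᴴ := by
    rw [← Matrix.star_eq_conjTranspose]; exact hHerm.spectral_theorem
  set g : B → ℂ := fun i => if hHerm.eigenvalues i = 0 then 0
      else (((Real.sqrt (hHerm.eigenvalues i))⁻¹ : ℝ) : ℂ) with hgdef
  set ind : B → ℂ := fun i => if hHerm.eigenvalues i = 0 then 0 else 1 with hinddef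
  have hnn : ∀ i, 0 ≤ hHerm.eigenvalues i := hH.eigenvalues_nonneg
  have hlam : ∀ i, lam i = ((hHerm.eigenvalues i : ℝ) : ℂ) := fun i => rfl
  have star_g : star g = g := by
    funext i
    simp only [Pi.star_apply, hgdef]
    by_cases h : hHerm.eigenvalues i = 0 <;> simp [h]
  have star_ind : star ind = ind := by
    funext i
    simp only [Pi.star_apply, hinddef]
    by_cases h : hHerm.eigenvalues i = 0 <;> simp [h]
  have key_pt : ∀ i, hHerm.eigenvalues i ≠ 0 →
      (((Real.sqrt (hHerm.eigenvalues i))⁻¹ : ℝ) : ℂ) * ((hHerm.eigenvalues i : ℝ) : ℂ)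
        * (((Real.sqrt (hHerm.eigenvalues i))⁻¹ : ℝ) : ℂ) = 1 := by
    intro i h
    have hpos : 0 < hHerm.eigenvalues i := lt_of_le_of_ne (hnn i) (Ne.symm h)
    have hs : Real.sqrt (hHerm.eigenvalues i) * Real.sqrt (hHerm.eigenvalues i)
        = hHerm.eigenvalues i := Real.mul_self_sqrt (hnn i)
    have hsne : Real.sqrt (hHerm.eigenvalues i) ≠ 0 := by positivity
    rw [← Complex.ofReal_mul, ← Complex.ofReal_mul, ← Complex.ofReal_one]
    congr 1
    field_simp
    rw [Real.sq_sqrt (hnn i)]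
  have e1 : g * lam * g = ind := by
    funext i
    simp only [Pi.mul_apply, hgdef, hinddef, hlam i]
    by_cases h : hHerm.eigenvalues i = 0
    · simp [h]
    · simp only [if_neg h]
      exact key_pt i h
  have e2 : g * (lam * lam) * g = lam := by
    funext i
    simp only [Pi.mul_apply, hgdef, hlam i]
    by_cases h : hHerm.eigenvalues i = 0
    · simp [h]
    · simp only [if_neg h]
      have := key_pt i h
      set a : ℂ := (((Real.sqrt (hHerm.eigenvalues i))⁻¹ : ℝ) : ℂ)
      set s : ℂ := ((hHerm.eigenvalues i : ℝ) : ℂ)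
      calc a * (s * s) * a = (a * s * a) * s := by ring
      _ = s := by rw [this, one_mul]
  have e5 : (g * g) * lam * (g * g) = g * g := by
    funext i
    simp only [Pi.mul_apply, hgdef, hlam i]
    by_cases h : hHerm.eigenvalues i = 0
    · simp [h]
    · simp only [if_neg h]
      have := key_pt i h
      set a : ℂ := (((Real.sqrt (hHerm.eigenvalues i))⁻¹ : ℝ) : ℂ)
      set s : ℂ := ((hHerm.eigenvalues i : ℝ) : ℂ)
      calc a * a * s * (a * a) = (a * s * a) * (a * a) := by ring
      _ = a * a := by rw [this, one_mul]
  have e4 : ind * ind = ind := by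
    funext i
    simp only [Pi.mul_apply, hinddef]
    by_cases h : hHerm.eigenvalues i = 0 <;> simp [h]
  set T : Matrix B B ℂ := U * Matrix.diagonal g * Uᴴ with hTdef
  set Pi : Matrix B B ℂ := U * Matrix.diagonal ind * Uᴴ with hPidef
  have hT : Tᴴ = T := Dherm U g star_g
  have hPiH : Piᴴ = Pi := Dherm U ind star_ind
  have hPiidem : Pi * Pi = Pi := by rw [hPidef, Dmul U hU, e4]
  have hTT : T * T = U * Matrix.diagonal (g * g) * Uᴴ := Dmul U hU g g
  have hTHT : T * H * T = Pi := by
    rw [hspec, hTdef, Dmul U hU, Dmul U hU, e1, hPidef]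
  have hTHHT : T * (H * H) * T = H := by
    rw [hspec, hTdef, Dmul U hU, Dmul U hU, Dmul U hU, e2]
  have hTTHTT : (T * T) * H * (T * T) = T * T := by
    rw [hTT, hspec, Dmul U hU, Dmul U hU, e5]
  -- the candidate
  refine ⟨M * (T * Qᵀ * T) * Mᴴ, ?_, ?_, ?_, ?_⟩
  · have h1 : (T * Qᵀ * T).PosSemidef := by
      have := hQ.transpose.mul_mul_conjTranspose_same T
      rwa [hT] at this
    exact h1.mul_mul_conjTranspose_same M
  · have hR : (M * (T * T) * Mᴴ) * (M * (T * T) * Mᴴ) = M * (T * T) * Mᴴ := by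
      have expand : (M * (T * T) * Mᴴ) * (M * (T * T) * Mᴴ)
          = M * ((T * T) * H * (T * T)) * Mᴴ := by
        rw [hHdef]; simp only [Matrix.mul_assoc]
      rw [expand, hTTHTT]
    have hRH : (M * (T * T) * Mᴴ).IsHermitian := by
      have : (T * T).IsHermitian := by
        rw [Matrix.IsHermitian, Matrix.conjTranspose_mul, hT]
      exact Matrix.isHermitian_mul_mul_conjTranspose M this
    have h1 : ((1 : Matrix A A ℂ) - M * (T * T) * Mᴴ).PosSemidef := proj_le_one hRH hR
    have h2 : (M * (T * (1 - Qᵀ) * T) * Mᴴ).PosSemidef := by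
      have hq : ((1 : Matrix B B ℂ) - Qᵀ).PosSemidef := by
        have := hQ1.transpose
        rwa [Matrix.transpose_sub, Matrix.transpose_one] at this
      have h3 : (T * (1 - Qᵀ) * T).PosSemidef := by
        have := hq.mul_mul_conjTranspose_same T
        rwa [hT] at this
      exact h3.mul_mul_conjTranspose_same M
    have hsplit : (1 : Matrix A A ℂ) - M * (T * Qᵀ * T) * Mᴴ
        = ((1 : Matrix A A ℂ) - M * (T * T) * Mᴴ) + M * (T * (1 - Qᵀ) * T) * Mᴴ := by
      have : M * (T * (1 - Qᵀ) * T) * Mᴴ = M * (T * T) * Mᴴ - M * (T * Qᵀ * T) * Mᴴ := by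
        simp only [Matrix.mul_sub, Matrix.sub_mul, Matrix.mul_one]
      rw [this]; abel
    rw [hsplit]
    exact h1.add h2
  · have step1 : ((M * (T * Qᵀ * T) * Mᴴ) * (M * Mᴴ)).trace
        = ((T * Qᵀ * T) * (H * H)).trace := by
      rw [trace_sandwich]
      rw [show Mᴴ * (M * Mᴴ) * M = H * H by rw [hHdef]; simp only [Matrix.mul_assoc]]
    have step2 : ((T * Qᵀ * T) * (H * H)).trace = (Qᵀ * H).trace := by
      have := trace_sandwich T Qᵀ (H * H)
      rw [hT] at this
      rw [this, hTHHT]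
    have step3 : (Q * Hᵀ).trace = (Qᵀ * H).trace := by
      rw [← Matrix.trace_transpose (Q * Hᵀ), Matrix.transpose_mul,
        Matrix.transpose_transpose]
      exact Matrix.trace_mul_comm H Qᵀ
    rw [step1, step2, step3]
  · have step1 : (M * (T * Qᵀ * T) * Mᴴ).trace = (Qᵀ * Pi).trace := by
      have h1 : (M * (T * Qᵀ * T) * Mᴴ).trace = ((M * (T * Qᵀ * T) * Mᴴ) * 1).trace := by
        rw [Matrix.mul_one]
      rw [h1, trace_sandwich, Matrix.mul_one]
      have := trace_sandwich T Qᵀ H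
      rw [hT] at this
      rw [← hHdef, this, hTHT]
    have h2 : 0 ≤ ((Qᵀ * (1 - Pi)).trace).re :=
      re_trace_mul_nonneg hQ.transpose (proj_le_one (by rw [Matrix.IsHermitian]; exact hPiH) hPiidem)
    have h3 : (Qᵀ * (1 - Pi)).trace = Q.trace - (Qᵀ * Pi).trace := by
      rw [Matrix.mul_sub, Matrix.mul_one, Matrix.trace_sub, Matrix.trace_transpose]
    rw [step1]
    rw [h3] at h2
    have := Complex.sub_re Q.trace ((Qᵀ * Pi).trace)
    rw [this] at h2
    linarith

lemma ptR_outer {A B : Type*} [Fintype A] [Fintype B] (v : A × B → ℂ) :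
    ptR (outer v) = (Matrix.of fun a b => v (a, b)) * (Matrix.of fun a b => v (a, b))ᴴ := by
  ext a1 a2
  simp [ptR, outer, Matrix.mul_apply, Matrix.vecMulVec_apply, Matrix.conjTranspose_apply]

lemma ptL_outer {A B : Type*} [Fintype A] [Fintype B] (v : A × B → ℂ) :
    ptL (outer v) = ((Matrix.of fun a b => v (a, b))ᴴ * (Matrix.of fun a b => v (a, b)))ᵀ := by
  ext b1 b2
  simp [ptL, outer, Matrix.mul_apply, Matrix.vecMulVec_apply, Matrix.conjTranspose_apply,
    mul_comm]

end

end Stmt10Aux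


namespace Stmt10Aux

lemma cq_le {X A B : Type*} [Fintype X] [Fintype A] [DecidableEq A]
    [Fintype B] [DecidableEq B]
    (P : X → ℝ) (hP0 : ∀ x, 0 ≤ P x) (hP1 : ∑ x, P x = 1)
    (v : X → A × B → ℂ) (hv : ∀ x, ∑ p, Complex.normSq (v x p) = 1)
    (ε : ℝ) (hε0 : 0 ≤ ε) :
    cqCondVal P (fun x => ptR (outer (v x))) ε
      ≤ cqCondVal P (fun x => ptL (outer (v x))) ε := by
  have hbdd : BddBelow {t : ℝ | ∃ Q : X → Matrix A A ℂ,
      (∀ x, (Q x).PosSemidef ∧ ((1 : Matrix A A ℂ) - Q x).PosSemidef) ∧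
      1 - ε ≤ ∑ x, P x * ((Q x * ptR (outer (v x))).trace).re ∧
      t = ∑ x, P x * ((Q x).trace).re} := by
    refine ⟨0, fun t ht => ?_⟩
    obtain ⟨Q, hQ, _, rfl⟩ := ht
    exact Finset.sum_nonneg fun x _ => mul_nonneg (hP0 x) (re_trace_nonneg (hQ x).1)
  have htr : ∀ x, ((ptL (outer (v x))).trace).re = 1 := by
    intro x
    have h1 : ((ptL (outer (v x))).trace).re = ∑ b, ∑ a, Complex.normSq (v x (a, b)) := by
      simp [Matrix.trace, ptL, outer, Matrix.diag, Complex.re_sum, Matrix.vecMulVec_apply,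
        Complex.star_def, Complex.mul_conj]
    rw [h1, Finset.sum_comm]
    exact (Fintype.sum_prod_type (f := fun p => Complex.normSq (v x p))).symm.trans (hv x)
  have hne : ({t : ℝ | ∃ Q : X → Matrix B B ℂ,
      (∀ x, (Q x).PosSemidef ∧ ((1 : Matrix B B ℂ) - Q x).PosSemidef) ∧
      1 - ε ≤ ∑ x, P x * ((Q x * ptL (outer (v x))).trace).re ∧
      t = ∑ x, P x * ((Q x).trace).re}).Nonempty := by
    refine ⟨∑ x, P x * (((1 : Matrix B B ℂ)).trace).re, fun _ => 1,
      fun x => ⟨Matrix.PosSemidef.one, by simpa using (Matrix.PosSemidef.zero (n := B))⟩, ?_, rfl⟩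
    have hsum : ∑ x, P x * (((1 : Matrix B B ℂ) * ptL (outer (v x))).trace).re = 1 := by
      rw [← hP1]
      refine Finset.sum_congr rfl fun x _ => ?_
      rw [Matrix.one_mul, htr x, mul_one]
    rw [hsum]
    linarith
  unfold cqCondVal
  refine le_csInf hne ?_
  rintro t ⟨Q, hQp, hcond, rfl⟩
  choose Q' h1 h2 h3 h4 using fun x =>
    key (Matrix.of fun a b => v x (a, b)) (hQp x).1 (hQp x).2
  refine (csInf_le hbdd ⟨Q', fun x => ⟨h1 x, h2 x⟩, ?_, rfl⟩).trans ?_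
  · refine le_trans hcond (le_of_eq (Finset.sum_congr rfl fun x _ => ?_))
    simp only [ptL_outer (v x), ptR_outer (v x)]
    rw [h3 x]
  · exact Finset.sum_le_sum fun x _ => mul_le_mul_of_nonneg_left (h4 x) (hP0 x)

end Stmt10Aux


/-- for a cq state whose conditional states are pure on `A ⊗ B`,
`H_H^ε(B|X) = H_H^ε(A|X)`. -/
theorem stmt10 {X A B : Type*} [Fintype X] [Fintype A] [DecidableEq A]
    [Fintype B] [DecidableEq B]
    (P : X → ℝ) (hP0 : ∀ x, 0 ≤ P x) (hP1 : ∑ x, P x = 1)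
    (v : X → A × B → ℂ) (hv : ∀ x, ∑ p, Complex.normSq (v x p) = 1)
    (ε : ℝ) (hε0 : 0 ≤ ε) (hε1 : ε ≤ 1) :
    Real.logb 2 (cqCondVal P (fun x => ptL (outer (v x))) ε)
      = Real.logb 2 (cqCondVal P (fun x => ptR (outer (v x))) ε) := by
  have h1 := Stmt10Aux.cq_le P hP0 hP1 v hv ε hε0
  set w : X → B × A → ℂ := fun x p => v x (p.2, p.1) with hw
  have hvw : ∀ x, ∑ p, Complex.normSq (w x p) = 1 := by
    intro x
    rw [← hv x]
    exact Fintype.sum_equiv (Equiv.prodComm B A) _ _ (fun p => rfl)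
  have h2 := Stmt10Aux.cq_le P hP0 hP1 w hvw ε hε0
  have eL : (fun x => ptR (outer (w x))) = fun x => ptL (outer (v x)) := by
    funext x; ext b1 b2
    simp [ptR, ptL, outer, Matrix.vecMulVec_apply, hw]
  have eR : (fun x => ptL (outer (w x))) = fun x => ptR (outer (v x)) := by
    funext x; ext a1 a2
    simp [ptR, ptL, outer, Matrix.vecMulVec_apply, hw]
  rw [eL, eR] at h2
  exact congrArg (Real.logb 2) (le_antisymm h2 h1)
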